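/- There exists b* > 1/3 such that for every b ∈ (0,b*) and every x ∈ (0,∞), one has φ_1(x) − b·φ_{1,b}(x) > 0. -/

import Mathlib

/-!
Integrating by parts against `cos η` turns `φ₁(x) − b φ_{1,b}(x)` into the integral over
`[0, 2π]` of a function of `s = sin (η/2)` and `c = cos (η/2)`, symmetric about `π`. Fix `θ` with
`σ = sin θ` and `4σ² ≤ 1 − b`. Where `s ≤ σ` the integrand is at least
`2(1 − b²) x e^{−2xσ} s c²`, and where `s ≥ σ` it is at least `−4b²/(1 + b) · x e^{−2xσ} s c²`;
both bounds carry the same factor `x e^{−2xσ}`, which makes the estimate uniform in `x`.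
Integrating `s c²` exactly, positivity reduces to
`2(1 − b²)(1 − cos³ θ) > 4b²/(1 + b) · cos³ θ`, true for `σ = 2/5` and `b < 1 − 4σ² = 9/25`.
-/

open MeasureTheory Real

noncomputable section

namespace DCV18

/-- `φ_1(x) = ∫_0^{2π} e^{−2x·sin(η/2)} cos η dη`. -/
def phi1 (x : ℝ) : ℝ :=
  ∫ η in (0:ℝ)..(2*π), Real.exp (-2*x*Real.sin (η/2)) * Real.cos η

/-- `φ_{1,b}(x) = ∫_0^{2π} e^{−x·√(1+b²−2b·cos η)} cos η dη`. -/
def phi1b (b x : ℝ) : ℝ :=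
  ∫ η in (0:ℝ)..(2*π), Real.exp (-x * Real.sqrt (1 + b^2 - 2*b*Real.cos η)) * Real.cos η

/-- `rho b (sin (η / 2)) = √(1 + b² − 2b cos η) = |1 − b e^{iη}|`. -/
def rho (b s : ℝ) : ℝ := √((1 - b) ^ 2 + 4 * b * s ^ 2)

def halfAngleIntegrand (b x s c : ℝ) : ℝ :=
  2 * x * s * c ^ 2 * (exp (-2 * x * s) - 2 * b ^ 2 * s * exp (-x * rho b s) / rho b s)

theorem integral_mul_cos_eq_neg_integral_mul_sin {f f' : ℝ → ℝ}
    (hf : ∀ η, HasDerivAt f (f' η) η) (hf' : Continuous f') :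
    ∫ η in (0:ℝ)..2 * π, f η * cos η = -∫ η in (0:ℝ)..2 * π, f' η * sin η := by
  rw [intervalIntegral.integral_mul_deriv_eq_deriv_mul (fun η _ => hf η)
    (fun η _ => hasDerivAt_sin η) (hf'.intervalIntegrable _ _)
    (continuous_cos.intervalIntegrable _ _)]
  simp

theorem integral_eq_two_mul_integral_of_symm {f : ℝ → ℝ} {a : ℝ} (hf : Continuous f)
    (hsymm : ∀ t, f (2 * a - t) = f t) :
    ∫ t in (0:ℝ)..2 * a, f t = 2 * ∫ t in (0:ℝ)..a, f t := by
  have hrefl : ∫ t in a..2 * a, f t = ∫ t in (0:ℝ)..a, f t := by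
    have h := intervalIntegral.integral_comp_sub_left f (2 * a) (a := 0) (b := a)
    simp only [hsymm, sub_zero] at h
    rw [h, two_mul, add_sub_cancel_right]
  rw [← intervalIntegral.integral_add_adjacent_intervals (hf.intervalIntegrable 0 a)
    (hf.intervalIntegrable a (2 * a)), hrefl, two_mul]

theorem integral_sin_half_mul_cos_half_sq (u v : ℝ) :
    ∫ t in u..v, sin (t / 2) * cos (t / 2) ^ 2 = 2 / 3 * (cos (u / 2) ^ 3 - cos (v / 2) ^ 3) := by
  have hderiv : ∀ t ∈ Set.uIcc u v, HasDerivAt (fun t => -(2 / 3) * cos (t / 2) ^ 3)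
      (sin (t / 2) * cos (t / 2) ^ 2) t := fun t _ => by
    refine (((((hasDerivAt_id' t).div_const 2).cos).fun_pow 3).const_mul (-(2 / 3))).congr_deriv ?_
    norm_num; ring
  rw [intervalIntegral.integral_eq_sub_of_hasDerivAt hderiv
    (by apply Continuous.intervalIntegrable; fun_prop)]
  ring

theorem one_add_sq_sub_two_mul_mul_cos (b η : ℝ) :
    1 + b ^ 2 - 2 * b * cos η = (1 - b) ^ 2 + 4 * b * sin (η / 2) ^ 2 := by
  have h := sin_sq_eq_half_sub (η / 2)
  rw [mul_div_cancel₀ η two_ne_zero] at h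
  rw [h]; ring

theorem one_add_sq_sub_two_mul_mul_cos_pos {b : ℝ} (hb0 : 0 ≤ b) (hb1 : b < 1) (η : ℝ) :
    0 < 1 + b ^ 2 - 2 * b * cos η := by
  rw [one_add_sq_sub_two_mul_mul_cos]
  have : 0 < (1 - b) ^ 2 := by nlinarith
  positivity

theorem phi1_eq_integral (x : ℝ) :
    phi1 x = ∫ η in (0:ℝ)..2 * π, x * cos (η / 2) * exp (-2 * x * sin (η / 2)) * sin η := by
  have hf : ∀ η, HasDerivAt (fun η => exp (-2 * x * sin (η / 2)))
      (-(x * cos (η / 2) * exp (-2 * x * sin (η / 2)))) η := fun η => by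
    convert ((((hasDerivAt_id' η).div_const 2).sin).const_mul (-2 * x)).exp using 1
    ring
  rw [phi1, integral_mul_cos_eq_neg_integral_mul_sin hf (by fun_prop),
    ← intervalIntegral.integral_neg]
  simp only [neg_mul, neg_neg]

theorem phi1b_eq_integral {b : ℝ} (hb0 : 0 ≤ b) (hb1 : b < 1) (x : ℝ) :
    phi1b b x = ∫ η in (0:ℝ)..2 * π, x * b * sin η / √(1 + b ^ 2 - 2 * b * cos η) *
      exp (-x * √(1 + b ^ 2 - 2 * b * cos η)) * sin η := by
  have hq := one_add_sq_sub_two_mul_mul_cos_pos hb0 hb1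
  have hf : ∀ η, HasDerivAt (fun η => exp (-x * √(1 + b ^ 2 - 2 * b * cos η)))
      (-(x * b * sin η / √(1 + b ^ 2 - 2 * b * cos η) *
        exp (-x * √(1 + b ^ 2 - 2 * b * cos η)))) η := fun η => by
    convert ((((hasDerivAt_cos η).const_mul (2 * b)).const_sub (1 + b ^ 2)).sqrt
      (hq η).ne').const_mul (-x) |>.exp using 1
    field_simp
  have hf' : Continuous fun η => -(x * b * sin η / √(1 + b ^ 2 - 2 * b * cos η) *
        exp (-x * √(1 + b ^ 2 - 2 * b * cos η))) := by
    have := fun η => (sqrt_pos.2 (hq η)).ne'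
    fun_prop (disch := assumption)
  rw [phi1b, integral_mul_cos_eq_neg_integral_mul_sin hf hf',
    ← intervalIntegral.integral_neg]
  simp only [neg_mul, neg_neg]

theorem phi1_sub_mul_phi1b_eq_integral {b : ℝ} (hb0 : 0 ≤ b) (hb1 : b < 1) (x : ℝ) :
    phi1 x - b * phi1b b x =
      ∫ η in (0:ℝ)..2 * π, halfAngleIntegrand b x (sin (η / 2)) (cos (η / 2)) := by
  have hq := fun η => (sqrt_pos.2 (one_add_sq_sub_two_mul_mul_cos_pos hb0 hb1 η)).ne'
  rw [phi1_eq_integral, phi1b_eq_integral hb0 hb1, ← intervalIntegral.integral_const_mul,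
    ← intervalIntegral.integral_sub (by apply Continuous.intervalIntegrable; fun_prop)
      (by apply Continuous.intervalIntegrable; fun_prop (disch := assumption))]
  refine intervalIntegral.integral_congr fun η _ => ?_
  have hsin : sin η = 2 * sin (η / 2) * cos (η / 2) := by
    rw [← sin_two_mul, mul_div_cancel₀ η two_ne_zero]
  simp only [halfAngleIntegrand, rho, ← one_add_sq_sub_two_mul_mul_cos, hsin]
  ring

theorem rho_pos {b : ℝ} (hb0 : 0 ≤ b) (hb1 : b < 1) (s : ℝ) : 0 < rho b s := by
  have : 0 < (1 - b) ^ 2 := by nlinarith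
  unfold rho; positivity

theorem rho_mono {b σ s : ℝ} (hb0 : 0 ≤ b) (hσ0 : 0 ≤ σ) (hσs : σ ≤ s) : rho b σ ≤ rho b s := by
  unfold rho; gcongr

theorem two_mul_le_rho {b s : ℝ} (hs : 0 ≤ s) (h : 4 * s ^ 2 ≤ 1 - b) : 2 * s ≤ rho b s := by
  rw [rho, le_sqrt (by positivity) (by nlinarith)]
  nlinarith

theorem one_add_mul_le_rho {b s : ℝ} (hb0 : 0 ≤ b) (hs0 : 0 ≤ s) (hs1 : s ≤ 1) :
    (1 + b) * s ≤ rho b s := by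
  rw [rho, le_sqrt (by positivity) (by positivity)]
  nlinarith [mul_nonneg (sq_nonneg (1 - b)) (sub_nonneg.2 (pow_le_one₀ hs0 hs1 (n := 2)))]

theorem halfAngleIntegrand_ge_of_le {b x σ s : ℝ} (c : ℝ) (hb0 : 0 ≤ b) (hx : 0 ≤ x)
    (hs : 0 ≤ s) (hsσ : s ≤ σ) (hσ : 4 * σ ^ 2 ≤ 1 - b) :
    2 * (1 - b ^ 2) * x * exp (-2 * x * σ) * (s * c ^ 2) ≤ halfAngleIntegrand b x s c := by
  have hρ : 2 * s ≤ rho b s := two_mul_le_rho hs (by nlinarith)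
  have hexp : exp (-x * rho b s) ≤ exp (-2 * x * s) := exp_le_exp.2 (by nlinarith)
  have hsec : 2 * b ^ 2 * s * exp (-x * rho b s) / rho b s ≤ b ^ 2 * exp (-2 * x * s) :=
    calc 2 * b ^ 2 * s * exp (-x * rho b s) / rho b s
        = b ^ 2 * exp (-x * rho b s) * (2 * s / rho b s) := by ring
      _ ≤ b ^ 2 * exp (-2 * x * s) * 1 :=
        mul_le_mul (by gcongr) (div_le_one_of_le₀ hρ (by linarith))
          (div_nonneg (by positivity) (sqrt_nonneg _)) (by positivity)
      _ = _ := mul_one _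
  have hσexp : exp (-2 * x * σ) ≤ exp (-2 * x * s) := exp_le_exp.2 (by nlinarith)
  have hb2 : 0 ≤ 1 - b ^ 2 := by nlinarith
  unfold halfAngleIntegrand
  calc 2 * (1 - b ^ 2) * x * exp (-2 * x * σ) * (s * c ^ 2)
      = 2 * x * s * c ^ 2 * ((1 - b ^ 2) * exp (-2 * x * σ)) := by ring
    _ ≤ 2 * x * s * c ^ 2 * ((1 - b ^ 2) * exp (-2 * x * s)) := by gcongr
    _ = 2 * x * s * c ^ 2 * (exp (-2 * x * s) - b ^ 2 * exp (-2 * x * s)) := by ring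
    _ ≤ _ := by gcongr

theorem halfAngleIntegrand_ge_of_ge {b x σ s : ℝ} (c : ℝ) (hb0 : 0 ≤ b) (hb1 : b < 1)
    (hx : 0 ≤ x) (hσ0 : 0 ≤ σ) (hσs : σ ≤ s) (hs1 : s ≤ 1) (hσ : 4 * σ ^ 2 ≤ 1 - b) :
    -(4 * b ^ 2 / (1 + b)) * x * exp (-2 * x * σ) * (s * c ^ 2) ≤ halfAngleIntegrand b x s c := by
  have hs0 : 0 ≤ s := hσ0.trans hσs
  have hρ0 := rho_pos hb0 hb1 s
  have hexp : exp (-x * rho b s) ≤ exp (-2 * x * σ) := by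
    have := (two_mul_le_rho hσ0 hσ).trans (rho_mono hb0 hσ0 hσs)
    exact exp_le_exp.2 (by nlinarith)
  have hratio : s / rho b s ≤ 1 / (1 + b) := by
    rw [div_le_div_iff₀ hρ0 (by linarith)]
    linarith [one_add_mul_le_rho hb0 hs0 hs1]
  have hsec : 2 * b ^ 2 * s * exp (-x * rho b s) / rho b s ≤
      2 * b ^ 2 / (1 + b) * exp (-2 * x * σ) :=
    calc 2 * b ^ 2 * s * exp (-x * rho b s) / rho b s
        = 2 * b ^ 2 * exp (-x * rho b s) * (s / rho b s) := by ring
      _ ≤ 2 * b ^ 2 * exp (-2 * x * σ) * (1 / (1 + b)) := by gcongr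
      _ = _ := by ring
  have h0 : 0 ≤ 2 * x * s * c ^ 2 := by positivity
  unfold halfAngleIntegrand
  calc -(4 * b ^ 2 / (1 + b)) * x * exp (-2 * x * σ) * (s * c ^ 2)
      = 2 * x * s * c ^ 2 * (0 - 2 * b ^ 2 / (1 + b) * exp (-2 * x * σ)) := by ring
    _ ≤ _ := by gcongr; positivity

theorem continuous_halfAngleIntegrand_sin_cos {b : ℝ} (hb0 : 0 ≤ b) (hb1 : b < 1) (x : ℝ) :
    Continuous fun t => halfAngleIntegrand b x (sin (t / 2)) (cos (t / 2)) := by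
  have := fun t => (rho_pos hb0 hb1 (sin (t / 2))).ne'
  unfold halfAngleIntegrand rho at *
  fun_prop (disch := assumption)

theorem integral_halfAngleIntegrand_pi_ge {b x θ : ℝ} (hb0 : 0 ≤ b) (hb1 : b < 1) (hx : 0 ≤ x)
    (hθ0 : 0 ≤ θ) (hθ : θ ≤ π / 2) (hσ : 4 * sin θ ^ 2 ≤ 1 - b) :
    2 / 3 * x * exp (-2 * x * sin θ) *
        (2 * (1 - b ^ 2) * (1 - cos θ ^ 3) - 4 * b ^ 2 / (1 + b) * cos θ ^ 3) ≤
      ∫ t in (0:ℝ)..π, halfAngleIntegrand b x (sin (t / 2)) (cos (t / 2)) := by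
  have hG := continuous_halfAngleIntegrand_sin_cos hb0 hb1 x
  have hF : Continuous fun t => sin (t / 2) * cos (t / 2) ^ 2 := by fun_prop
  have hσ0 : 0 ≤ sin θ := sin_nonneg_of_nonneg_of_le_pi hθ0 (by linarith [pi_pos])
  have hnear : ∫ t in (0:ℝ)..2 * θ, 2 * (1 - b ^ 2) * x * exp (-2 * x * sin θ) *
        (sin (t / 2) * cos (t / 2) ^ 2) ≤
      ∫ t in (0:ℝ)..2 * θ, halfAngleIntegrand b x (sin (t / 2)) (cos (t / 2)) := by
    refine intervalIntegral.integral_mono_on (by linarith) ((hF.const_mul _).intervalIntegrable _ _)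
      (hG.intervalIntegrable _ _) fun t ht => ?_
    exact halfAngleIntegrand_ge_of_le _ hb0 hx
      (sin_nonneg_of_nonneg_of_le_pi (by linarith [ht.1]) (by linarith [ht.2, pi_pos]))
      (sin_le_sin_of_le_of_le_pi_div_two (by linarith [ht.1, pi_pos]) hθ (by linarith [ht.2])) hσ
  have hfar : ∫ t in 2 * θ..π, -(4 * b ^ 2 / (1 + b)) * x * exp (-2 * x * sin θ) *
        (sin (t / 2) * cos (t / 2) ^ 2) ≤
      ∫ t in 2 * θ..π, halfAngleIntegrand b x (sin (t / 2)) (cos (t / 2)) := by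
    refine intervalIntegral.integral_mono_on (by linarith) ((hF.const_mul _).intervalIntegrable _ _)
      (hG.intervalIntegrable _ _) fun t ht => ?_
    exact halfAngleIntegrand_ge_of_ge _ hb0 hb1 hx hσ0
      (sin_le_sin_of_le_of_le_pi_div_two (by linarith [pi_pos]) (by linarith [ht.2])
        (by linarith [ht.1]))
      (sin_le_one _) hσ
  rw [intervalIntegral.integral_const_mul, integral_sin_half_mul_cos_half_sq] at hnear hfar
  rw [← intervalIntegral.integral_add_adjacent_intervals (hG.intervalIntegrable 0 (2 * θ))
    (hG.intervalIntegrable _ _)]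
  simp only [zero_div, cos_zero, mul_div_cancel_left₀ θ two_ne_zero, cos_pi_div_two] at hnear hfar
  linear_combination hnear + hfar

theorem integral_halfAngleIntegrand_two_pi {b : ℝ} (hb0 : 0 ≤ b) (hb1 : b < 1) (x : ℝ) :
    ∫ t in (0:ℝ)..2 * π, halfAngleIntegrand b x (sin (t / 2)) (cos (t / 2)) =
      2 * ∫ t in (0:ℝ)..π, halfAngleIntegrand b x (sin (t / 2)) (cos (t / 2)) :=
  integral_eq_two_mul_integral_of_symm (continuous_halfAngleIntegrand_sin_cos hb0 hb1 x)
    fun t => by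
      simp only [show (2 * π - t) / 2 = π - t / 2 by ring, sin_pi_sub, cos_pi_sub,
        halfAngleIntegrand, neg_sq]

theorem cos_arcsin_two_fifths_pow_three_le : cos (arcsin (2 / 5)) ^ 3 ≤ 0.78 := by
  have h0 : 0 ≤ cos (arcsin (2 / 5)) := cos_arcsin_nonneg _
  have h1 : cos (arcsin (2 / 5)) ≤ 23 / 25 := by
    nlinarith [sin_sq_add_cos_sq (arcsin (2 / 5)),
      sin_arcsin (x := 2 / 5) (by norm_num) (by norm_num)]
  calc cos (arcsin (2 / 5)) ^ 3 ≤ (23 / 25) ^ 3 := by gcongr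
    _ ≤ 0.78 := by norm_num

/-- There exists `b* > 1/3` such that for every `b ∈ (0,b*)` and every `x ∈ (0,∞)`,
one has `φ_1(x) − b·φ_{1,b}(x) > 0`. -/
theorem phi1_sub_b_phi1b_pos :
    ∃ bs : ℝ, 1/3 < bs ∧ ∀ b ∈ Set.Ioo (0:ℝ) bs, ∀ x : ℝ, 0 < x →
      0 < phi1 x - b * phi1b b x := by
  refine ⟨9 / 25, by norm_num, ?_⟩
  rintro b ⟨hb0, hb⟩ x hx
  have hb1 : b < 1 := by linarith
  set θ := arcsin (2 / 5)
  have hK : 0 < 2 * (1 - b ^ 2) * (1 - cos θ ^ 3) - 4 * b ^ 2 / (1 + b) * cos θ ^ 3 := by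
    have hC0 : 0 ≤ cos θ ^ 3 := pow_nonneg (cos_arcsin_nonneg _) 3
    have hC1 : cos θ ^ 3 ≤ 0.78 := cos_arcsin_two_fifths_pow_three_le
    have hfac : 1 ≤ (1 - b ^ 2) * (1 + b) := by nlinarith
    have hbsq : b ^ 2 ≤ (9 / 25) ^ 2 := by nlinarith
    rw [sub_pos, div_mul_eq_mul_div, div_lt_iff₀ (by linarith)]
    nlinarith [mul_le_mul_of_nonneg_left hfac (by linarith : (0:ℝ) ≤ 1 - cos θ ^ 3),
      mul_le_mul_of_nonneg_right hbsq hC0]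
  have hI := integral_halfAngleIntegrand_pi_ge (θ := θ) hb0.le hb1 hx.le
    (arcsin_nonneg.2 (by norm_num)) (arcsin_le_pi_div_two _)
    (by rw [sin_arcsin (by norm_num) (by norm_num)]; linarith)
  rw [phi1_sub_mul_phi1b_eq_integral hb0.le hb1, integral_halfAngleIntegrand_two_pi hb0.le hb1]
  have := mul_pos (by positivity : 0 < 2 / 3 * x * exp (-2 * x * sin θ)) hK
  linarith

end DCV18
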